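/- arXiv:1102.1155 — 4 statements merged into one kernel-verified Lean document; each statement's English description precedes it below -/
import Mathlib

section
/- For every real number x with 0 < x < 1, the series ∑_{n=1}^∞ ln(1 - x^n) converges and equals -∑_{n=1}^∞ (σ(n)/n)·x^n, where σ(n) denotes the sum of the positive divisors of n. -/
/-!
Expanding each logarithm, `-log (1 - x^a) = ∑_{b ≥ 1} x^(ab)/b`, so the series is minus the sum of
the absolutely convergent double series `∑_{a, b ≥ 1} x^(ab)/b`. Summing it along the fibres
`ab = m` instead of along the rows gives `∑_m (x^m/m) ∑_{ab = m} a = ∑_m σ(m)/m · x^m`.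
-/

/-- The sum of the positive divisors of `n`. -/
def sigma1 (n : ℕ) : ℕ := ∑ d ∈ n.divisors, d

open Real

theorem HasSum.sum_divisorsAntidiagonal {α : Type*} [AddCommGroup α] [UniformSpace α]
    [IsUniformAddGroup α] [CompleteSpace α] [T2Space α] {f : ℕ × ℕ → α} {a : α} (hf : HasSum f a)
    (hf0 : ∀ p : ℕ × ℕ, p.1 * p.2 = 0 → f p = 0) :
    HasSum (fun m : ℕ ↦ ∑ p ∈ m.divisorsAntidiagonal, f p) a := by
  convert hf.tsum_fiberwise (fun p ↦ p.1 * p.2) with m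
  rcases eq_or_ne m 0 with rfl | hm
  · rw [Nat.divisorsAntidiagonal_zero, Finset.sum_empty,
      tsum_congr fun p ↦ hf0 _ p.2, tsum_zero]
  · have hfiber : (fun p : ℕ × ℕ ↦ p.1 * p.2) ⁻¹' {m} = m.divisorsAntidiagonal := by
      ext p
      simp [hm]
    rw [hfiber, Finset.tsum_subtype']

theorem Real.hasSum_pow_div_log_of_abs_lt_one' {y : ℝ} (hy : |y| < 1) :
    HasSum (fun n : ℕ ↦ y ^ n / n) (-log (1 - y)) := by
  rw [← hasSum_nat_add_iff' 1]
  simpa using hasSum_pow_div_log_of_abs_lt_one hy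

/-- The term `x^(ab)/b` of the double series, written as `a/(ab) · x^(ab)` so that on the fibre
`ab = m` it reads `a/m · x^m`; division by zero makes it vanish when `a = 0` or `b = 0`. -/
noncomputable def lambertLogTerm (x : ℝ) (p : ℕ × ℕ) : ℝ :=
  p.1 / (p.1 * p.2 : ℕ) * x ^ (p.1 * p.2)

theorem lambertLogTerm_of_mul_eq_zero (x : ℝ) {p : ℕ × ℕ} (hp : p.1 * p.2 = 0) :
    lambertLogTerm x p = 0 := by
  simp [lambertLogTerm, hp]

theorem abs_lambertLogTerm_le {x : ℝ} (hx : |x| ≤ 1) (p : ℕ × ℕ) :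
    |lambertLogTerm x p| ≤ |x| ^ (p.1 - 1) * |x| ^ (p.2 - 1) := by
  rcases eq_or_ne (p.1 * p.2) 0 with hp | hp
  · rw [lambertLogTerm_of_mul_eq_zero x hp, abs_zero]
    positivity
  obtain ⟨ha, hb⟩ := mul_ne_zero_iff.mp hp
  have hexp : (p.1 - 1) + (p.2 - 1) ≤ p.1 * p.2 := by
    obtain ⟨a, ha'⟩ := Nat.exists_eq_succ_of_ne_zero ha
    obtain ⟨b, hb'⟩ := Nat.exists_eq_succ_of_ne_zero hb
    rw [ha', hb']
    simp only [Nat.succ_sub_one]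
    nlinarith
  have hcoef : (p.1 : ℝ) / (p.1 * p.2 : ℕ) ≤ 1 :=
    div_le_one_of_le₀ (by exact_mod_cast Nat.le_mul_of_pos_right _ (Nat.pos_of_ne_zero hb))
      (Nat.cast_nonneg _)
  calc |lambertLogTerm x p| = (p.1 : ℝ) / (p.1 * p.2 : ℕ) * |x| ^ (p.1 * p.2) := by
        rw [lambertLogTerm, abs_mul, abs_pow, abs_of_nonneg (by positivity)]
    _ ≤ |x| ^ (p.1 * p.2) := mul_le_of_le_one_left (by positivity) hcoef
    _ ≤ |x| ^ ((p.1 - 1) + (p.2 - 1)) := pow_le_pow_of_le_one (abs_nonneg x) hx hexp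
    _ = |x| ^ (p.1 - 1) * |x| ^ (p.2 - 1) := pow_add _ _ _

theorem summable_lambertLogTerm {x : ℝ} (hx : |x| < 1) : Summable (lambertLogTerm x) := by
  have hgeom : Summable (fun n : ℕ ↦ |x| ^ (n - 1)) :=
    (summable_nat_add_iff 1).mp (by simpa using summable_geometric_of_lt_one (abs_nonneg x) hx)
  refine Summable.of_norm_bounded (hgeom.mul_of_nonneg hgeom (fun _ ↦ by positivity)
    (fun _ ↦ by positivity)) (abs_lambertLogTerm_le hx.le)

theorem hasSum_lambertLogTerm_fst {x : ℝ} (hx : |x| < 1) {a : ℕ} (ha : a ≠ 0) :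
    HasSum (fun b ↦ lambertLogTerm x (a, b)) (-log (1 - x ^ a)) := by
  have hxa : |x ^ a| < 1 := by
    rw [abs_pow]
    exact pow_lt_one₀ (abs_nonneg x) hx ha
  convert hasSum_pow_div_log_of_abs_lt_one' hxa using 2 with b
  have : (a : ℝ) ≠ 0 := by exact_mod_cast ha
  rw [lambertLogTerm, ← pow_mul, Nat.cast_mul]
  field_simp

theorem sum_divisorsAntidiagonal_lambertLogTerm (x : ℝ) (m : ℕ) :
    ∑ p ∈ m.divisorsAntidiagonal, lambertLogTerm x p = sigma1 m / m * x ^ m := by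
  have hterm : ∀ p ∈ m.divisorsAntidiagonal, lambertLogTerm x p = p.1 / m * x ^ m := by
    intro p hp
    rw [lambertLogTerm, (Nat.mem_divisorsAntidiagonal.mp hp).1]
  rw [Finset.sum_congr rfl hterm, ← Finset.sum_mul, ← Finset.sum_div, sigma1,
    Nat.sum_divisorsAntidiagonal (fun a _ ↦ (a : ℝ)), Nat.cast_sum]

/-- For `0 < x < 1`, the series `∑_{n=1}^∞ ln(1 - x^n)` converges and equals
`-∑_{n=1}^∞ (σ(n)/n)·x^n`. -/
theorem log_series_eq_neg_sigma_series (x : ℝ) (hx0 : 0 < x) (hx1 : x < 1) :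
    HasSum (fun n : ℕ => Real.log (1 - x ^ (n + 1)))
      (-∑' n : ℕ, (sigma1 (n + 1) : ℝ) / (n + 1) * x ^ (n + 1)) := by
  have hx : |x| < 1 := abs_lt.mpr ⟨by linarith, hx1⟩
  have hsum := summable_lambertLogTerm hx
  set T := ∑' p, lambertLogTerm x p
  have hfibres : HasSum (fun m : ℕ ↦ (sigma1 m : ℝ) / m * x ^ m) T := by
    simpa only [sum_divisorsAntidiagonal_lambertLogTerm] using
      hsum.hasSum.sum_divisorsAntidiagonal fun _ ↦ lambertLogTerm_of_mul_eq_zero x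
  have hrows : HasSum (fun a ↦ ∑' b, lambertLogTerm x (a, b)) T :=
    hsum.hasSum.prod_fiberwise fun a ↦ (hsum.prod_factor a).hasSum
  have hrow_zero : ∑' b, lambertLogTerm x (0, b) = 0 := by
    simp [lambertLogTerm_of_mul_eq_zero]
  have hrow_succ (n : ℕ) : ∑' b, lambertLogTerm x (n + 1, b) = -log (1 - x ^ (n + 1)) :=
    (hasSum_lambertLogTerm_fst hx n.succ_ne_zero).tsum_eq
  rw [← hasSum_nat_add_iff' 1] at hfibres hrows
  simp only [Finset.sum_range_one, hrow_zero, hrow_succ, CharP.cast_eq_zero, div_zero, zero_mul,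
    sub_zero, Nat.cast_add, Nat.cast_one] at hfibres hrows
  rw [hfibres.tsum_eq]
  simpa using hrows.neg
end

section
/- For every real number x with 0 < x < 1, ζ(2)/ln(x) < ∑_{n=1}^∞ ln(1 - x^n), i.e., the sum of the series ∑_{n=1}^∞ ln(1 - x^n) is strictly greater than (π²/6)/ln(x); note ln(x) < 0, so the left-hand side is negative. -/
/-!
Expanding `-log (1 - x ^ n) = ∑ₖ x ^ (n k) / k` and summing the nonnegative double series over `n`
first gives `-∑ₙ log (1 - x ^ n) = ∑ₖ x ^ k / (k (1 - x ^ k))`. With `t = -log x > 0` each term is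
`1 / (k (e ^ (k t) - 1)) < 1 / (k² t)` because `e ^ u - 1 > u`, so the sum is strictly less
than `ζ(2) / t`.
-/

open Real

theorem HasSum.swap_of_nonneg {β γ : Type*} {f : β × γ → ℝ} {g : β → ℝ} {h : γ → ℝ} {a : ℝ}
    (hg : HasSum g a) (hf : 0 ≤ f) (hrow : ∀ b, HasSum (fun c ↦ f (b, c)) (g b))
    (hcol : ∀ c, HasSum (fun b ↦ f (b, c)) (h c)) : HasSum h a := by
  have hsummable : Summable f := (summable_prod_of_nonneg hf).2
    ⟨fun b ↦ (hrow b).summable, hg.summable.congr fun b ↦ (hrow b).tsum_eq.symm⟩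
  have hsum : HasSum f a := by
    rw [hg.unique (hsummable.hasSum.prod_fiberwise hrow)]
    exact hsummable.hasSum
  exact ((Equiv.prodComm γ β).hasSum_iff.2 hsum).prod_fiberwise hcol

theorem hasSum_pow_succ_of_lt_one {r : ℝ} (h₀ : 0 ≤ r) (h₁ : r < 1) :
    HasSum (fun n : ℕ ↦ r ^ (n + 1)) (r / (1 - r)) := by
  simpa only [pow_succ', div_eq_mul_inv] using (hasSum_geometric_of_lt_one h₀ h₁).mul_left r

theorem div_one_sub_lt_inv_neg_log {y : ℝ} (h₀ : 0 < y) (h₁ : y < 1) :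
    y / (1 - y) < (-log y)⁻¹ := by
  have hlog : -log y < y⁻¹ - 1 := by
    simpa only [log_inv] using log_lt_sub_one_of_pos (inv_pos.2 h₀) (inv_ne_one.2 h₁.ne)
  rw [div_lt_iff₀ (by linarith), inv_mul_eq_div, lt_div_iff₀ (by linarith [log_neg h₀ h₁])]
  calc y * -log y < y * (y⁻¹ - 1) := mul_lt_mul_of_pos_left hlog h₀
    _ = 1 - y := by field_simp

theorem hasSum_one_div_nat_succ_sq : HasSum (fun k : ℕ ↦ 1 / ((k : ℝ) + 1) ^ 2) (π ^ 2 / 6) := by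
  simpa using (hasSum_nat_add_iff' 1).2 hasSum_zeta_two

theorem pow_succ_div_one_sub_pow_succ_div_lt {x : ℝ} (h₀ : 0 < x) (h₁ : x < 1) (k : ℕ) :
    x ^ (k + 1) / (1 - x ^ (k + 1)) / (k + 1) < (-log x)⁻¹ * (1 / ((k : ℝ) + 1) ^ 2) := by
  have h := div_one_sub_lt_inv_neg_log (pow_pos h₀ (k + 1)) (pow_lt_one₀ h₀.le h₁ k.succ_ne_zero)
  rw [log_pow, Nat.cast_succ] at h
  calc x ^ (k + 1) / (1 - x ^ (k + 1)) / (k + 1) < (-((k + 1) * log x))⁻¹ / (k + 1) :=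
        div_lt_div_of_pos_right h (by positivity)
    _ = (-log x)⁻¹ * (1 / ((k : ℝ) + 1) ^ 2) := by field_simp

theorem summable_pow_succ_div_one_sub_pow_succ_div {x : ℝ} (h₀ : 0 < x) (h₁ : x < 1) :
    Summable fun k : ℕ ↦ x ^ (k + 1) / (1 - x ^ (k + 1)) / (k + 1) := by
  refine .of_nonneg_of_le (fun k ↦ ?_) (fun k ↦ (pow_succ_div_one_sub_pow_succ_div_lt h₀ h₁ k).le)
    (hasSum_one_div_nat_succ_sq.mul_left _).summable
  have : x ^ (k + 1) < 1 := pow_lt_one₀ h₀.le h₁ k.succ_ne_zero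
  exact div_nonneg (div_nonneg (by positivity) (by linarith)) (by positivity)

theorem tsum_pow_succ_div_one_sub_pow_succ_div_lt {x : ℝ} (h₀ : 0 < x) (h₁ : x < 1) :
    ∑' k : ℕ, x ^ (k + 1) / (1 - x ^ (k + 1)) / (k + 1) < π ^ 2 / 6 / -log x := by
  rw [← inv_mul_eq_div]
  exact hasSum_lt (fun k ↦ (pow_succ_div_one_sub_pow_succ_div_lt h₀ h₁ k).le)
    (pow_succ_div_one_sub_pow_succ_div_lt h₀ h₁ 0)
    (summable_pow_succ_div_one_sub_pow_succ_div h₀ h₁).hasSum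
    (hasSum_one_div_nat_succ_sq.mul_left _)

theorem hasSum_neg_log_one_sub_pow_succ {x : ℝ} (h₀ : 0 < x) (h₁ : x < 1) :
    HasSum (fun n : ℕ ↦ -log (1 - x ^ (n + 1)))
      (∑' k : ℕ, x ^ (k + 1) / (1 - x ^ (k + 1)) / (k + 1)) := by
  have hpow : ∀ k : ℕ, x ^ (k + 1) < 1 := fun k ↦ pow_lt_one₀ h₀.le h₁ k.succ_ne_zero
  refine (summable_pow_succ_div_one_sub_pow_succ_div h₀ h₁).hasSum.swap_of_nonneg
    (f := fun p : ℕ × ℕ ↦ (x ^ (p.2 + 1)) ^ (p.1 + 1) / ((p.1 : ℝ) + 1))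
    (fun p ↦ by positivity) (fun k ↦ ?_) (fun n ↦ ?_)
  · simpa only [← pow_mul, mul_comm] using
      (hasSum_pow_succ_of_lt_one (pow_pos h₀ (k + 1)).le (hpow k)).div_const ((k : ℝ) + 1)
  · exact hasSum_pow_div_log_of_abs_lt_one (x := x ^ (n + 1))
      (by rw [abs_of_pos (pow_pos h₀ _)]; exact hpow n)

/-- For `0 < x < 1`, `ζ(2)/ln(x) < ∑_{n=1}^∞ ln(1 - x^n)`, where `ζ(2) = π²/6`. -/
theorem zeta_two_div_log_lt_log_series (x : ℝ) (hx0 : 0 < x) (hx1 : x < 1) :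
    (Real.pi ^ 2 / 6) / Real.log x < ∑' n : ℕ, Real.log (1 - x ^ (n + 1)) := by
  have h := (hasSum_neg_log_one_sub_pow_succ hx0 hx1).neg.tsum_eq
  simp only [neg_neg] at h
  rw [h, ← neg_neg (log x), div_neg]
  exact neg_lt_neg (tsum_pow_succ_div_one_sub_pow_succ_div_lt hx0 hx1)
end

section
/- For every real number x with 0 < x < 1, the two-sided inequality ζ(2)/ln(x) < -∑_{n=1}^∞ (σ(n)/n)·x^n < x/(x-1) holds, where σ(n) is the sum of the positive divisors of n and ζ(2) = π²/6. -/
lemma sum_one_div_divisors (n : ℕ) (hn : n ≠ 0) :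
    ∑ d ∈ n.divisors, (1 : ℝ) / d = (sigma1 n : ℝ) / n := by
  rw [← Nat.sum_div_divisors n (fun d => (1:ℝ) / d), sigma1, Nat.cast_sum, Finset.sum_div]
  refine Finset.sum_congr rfl fun d hd => ?_
  rw [Nat.mem_divisors] at hd
  have hd0 : (d:ℝ) ≠ 0 := Nat.cast_ne_zero.2 (by rintro rfl; exact hn (Nat.eq_zero_of_zero_dvd hd.1))
  rw [Nat.cast_div hd.1 hd0, one_div_div]

/-- For `0 < x < 1`,
`ζ(2)/ln(x) < -∑_{n=1}^∞ (σ(n)/n)·x^n < x/(x-1)`, where `ζ(2) = π²/6`. -/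
theorem zeta_two_div_log_lt_neg_sigma_series_lt (x : ℝ) (hx0 : 0 < x) (hx1 : x < 1) :
    (Real.pi ^ 2 / 6) / Real.log x
        < -∑' n : ℕ, (sigma1 (n + 1) : ℝ) / (n + 1) * x ^ (n + 1) ∧
      -∑' n : ℕ, (sigma1 (n + 1) : ℝ) / (n + 1) * x ^ (n + 1) < x / (x - 1) := by
  have hx0' : (0:ℝ) ≤ x := hx0.le
  have h1x : (0:ℝ) < 1 - x := by linarith
  set F : ℕ × ℕ → ℝ := fun p => if p.2 = 0 then 0 else (1 / (p.1:ℝ)) * x ^ (p.1 * p.2)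
    with hFdef
  have hFnn : ∀ p, 0 ≤ F p := by
    intro p
    simp only [hFdef]
    split
    · exact le_refl 0
    · positivity
  have hgeo : Summable (fun n : ℕ => x ^ n) := summable_geometric_of_lt_one hx0' hx1
  have hbound : Summable (fun p : ℕ × ℕ => x⁻¹ * (x ^ p.1 * x ^ p.2)) :=
    (hgeo.mul_of_nonneg hgeo (fun n => pow_nonneg hx0' n) (fun n => pow_nonneg hx0' n)).mul_left _
  have hFle : ∀ p : ℕ × ℕ, F p ≤ x⁻¹ * (x ^ p.1 * x ^ p.2) := by
    rintro ⟨a, b⟩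
    rcases eq_or_ne b 0 with rfl | hb
    · simp only [hFdef, if_pos rfl]
      positivity
    rcases eq_or_ne a 0 with rfl | ha
    · simp only [hFdef, if_neg hb, Nat.cast_zero, div_zero, zero_mul]
      positivity
    · have h1 : 1 ≤ a := Nat.one_le_iff_ne_zero.2 ha
      have h2 : 1 ≤ b := Nat.one_le_iff_ne_zero.2 hb
      have hab : a + b ≤ a * b + 1 := by nlinarith
      have key : x ^ (a * b + 1) ≤ x ^ (a + b) := pow_le_pow_of_le_one hx0' hx1.le hab
      have hA : (1:ℝ) ≤ (a:ℝ) := by exact_mod_cast h1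
      calc F (a, b) = (1 / (a:ℝ)) * x ^ (a * b) := by simp only [hFdef, if_neg hb]
        _ ≤ 1 * x ^ (a * b) := by
            apply mul_le_mul_of_nonneg_right _ (pow_nonneg hx0' _)
            rw [div_le_one (by linarith)]; linarith
        _ = x⁻¹ * x ^ (a * b + 1) := by
            rw [one_mul, pow_succ, mul_comm (x ^ (a*b)) x, ← mul_assoc,
              inv_mul_cancel₀ hx0.ne', one_mul]
        _ ≤ x⁻¹ * x ^ (a + b) := mul_le_mul_of_nonneg_left key (inv_nonneg.2 hx0')
        _ = x⁻¹ * (x ^ a * x ^ b) := by rw [pow_add]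
  have hFsum : Summable F := Summable.of_nonneg_of_le hFnn hFle hbound
  set m : ℕ × ℕ → ℕ := fun p => p.1 * p.2 with hmdef
  set G : ℕ → ℝ := fun n => if n = 0 then (0:ℝ) else (sigma1 n : ℝ) / n * x ^ n with hGdef
  have hfib : ∀ n : ℕ, ∑' (p : m ⁻¹' {n}), F p = G n := by
    intro n
    rcases eq_or_ne n 0 with rfl | hn
    · rw [hGdef]
      simp only [if_pos rfl]
      have h0 : ∀ p : m ⁻¹' {(0:ℕ)}, F p = 0 := by
        rintro ⟨⟨a, b⟩, hp⟩
        simp only [Set.mem_preimage, Set.mem_singleton_iff, hmdef] at hp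
        rcases Nat.mul_eq_zero.1 hp with rfl | rfl
        · rcases eq_or_ne b 0 with rfl | hb
          · simp [hFdef]
          · simp [hFdef, hb]
        · simp [hFdef]
      simp [h0]
    · rw [hGdef]
      simp only [if_neg hn]
      have hset : m ⁻¹' {n} = ↑(n.divisorsAntidiagonal) := by
        ext p
        simp [hmdef, Nat.mem_divisorsAntidiagonal, hn]
      rw [hset, Finset.tsum_subtype' n.divisorsAntidiagonal F]
      have hcongr : ∀ p ∈ n.divisorsAntidiagonal, F p = (1 / (p.1:ℝ)) * x ^ n := by
        intro p hp
        rw [Nat.mem_divisorsAntidiagonal] at hp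
        have hb : p.2 ≠ 0 := by
          rintro h
          apply hn
          rw [← hp.1, h, mul_zero]
        simp only [hFdef, if_neg hb, hp.1]
      rw [Finset.sum_congr rfl hcongr, ← Finset.sum_mul,
        show (∑ p ∈ n.divisorsAntidiagonal, (1 / (p.1:ℝ))) = ∑ d ∈ n.divisors, 1 / (d:ℝ) from
          Nat.sum_divisorsAntidiagonal (fun a b => (1 / (a:ℝ))),
        sum_one_div_divisors n hn]
  have hHS : HasSum G (∑' p, F p) := by
    have h := hFsum.hasSum.tsum_fiberwise m
    rwa [show (fun c => ∑' (p : m ⁻¹' {c}), F p) = G from funext hfib] at h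
  have hGsum : Summable G := hHS.summable
  have hshift : (fun n : ℕ => (sigma1 (n + 1) : ℝ) / (n + 1) * x ^ (n + 1))
      = fun n => G (n + 1) := by
    funext n
    rw [hGdef]
    simp only [if_neg (Nat.succ_ne_zero n)]
    push_cast
    ring
  have hSsum : Summable (fun n : ℕ => (sigma1 (n + 1) : ℝ) / (n + 1) * x ^ (n + 1)) := by
    rw [hshift]
    exact (summable_nat_add_iff 1).2 hGsum
  have hSval : ∑' n : ℕ, (sigma1 (n + 1) : ℝ) / (n + 1) * x ^ (n + 1) = ∑' p, F p := by
    have h0 := Summable.tsum_eq_zero_add hGsum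
    have hG0 : G 0 = 0 := by simp [hGdef]
    rw [hG0, zero_add] at h0
    rw [hshift, ← h0, hHS.tsum_eq]
  -- lower bound
  have hgeoHS : HasSum (fun n : ℕ => x ^ (n + 1)) (x * (1 - x)⁻¹) := by
    have h := (hasSum_geometric_of_lt_one hx0' hx1).mul_left x
    rwa [show (fun n : ℕ => x * x ^ n) = fun n => x ^ (n + 1) from
      funext fun n => by rw [pow_succ, mul_comm]] at h
  have hlow : x * (1 - x)⁻¹ < ∑' n : ℕ, (sigma1 (n + 1) : ℝ) / (n + 1) * x ^ (n + 1) := by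
    rw [← hgeoHS.tsum_eq]
    refine Summable.tsum_lt_tsum (i := 1) (fun n => ?_) ?_ hgeoHS.summable hSsum
    · have h1 : (n + 1 : ℕ) ≤ sigma1 (n + 1) :=
        Finset.single_le_sum (fun i _ => Nat.zero_le i)
          (Nat.mem_divisors_self (n + 1) n.succ_ne_zero)
      have h2 : (1:ℝ) ≤ (sigma1 (n + 1) : ℝ) / ((n:ℝ) + 1) := by
        rw [le_div_iff₀ (by positivity), one_mul]
        exact_mod_cast h1
      nlinarith [pow_pos hx0 (n + 1)]
    · have h3 : sigma1 (1 + 1) = 3 := by decide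
      rw [h3]
      have h4 : (0:ℝ) < x ^ (1 + 1) := pow_pos hx0 _
      norm_num
      nlinarith
  have hgoal2 : -∑' n : ℕ, (sigma1 (n + 1) : ℝ) / (n + 1) * x ^ (n + 1) < x / (x - 1) := by
    have hrw : x / (x - 1) = -(x * (1 - x)⁻¹) := by
      rw [show x - 1 = -(1 - x) by ring, div_neg, div_eq_mul_inv]
    rw [hrw]
    exact neg_lt_neg hlow
  -- upper bound
  have hprodHS : HasSum (fun a : ℕ => ∑' b : ℕ, F (a, b)) (∑' p, F p) :=
    hFsum.hasSum.prod_fiberwise fun a => (hFsum.prod_factor a).hasSum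
  have hinner : ∀ a : ℕ, ∑' b : ℕ, F (a, b) ≤ x / (1 - x) * (1 / (a:ℝ) ^ 2) := by
    intro a
    rcases eq_or_ne a 0 with rfl | ha
    · have h0 : ∀ b : ℕ, F (0, b) = 0 := by
        intro b
        rcases eq_or_ne b 0 with rfl | hb
        · simp [hFdef]
        · simp [hFdef, hb]
      simp [h0]
    · obtain ⟨c, rfl⟩ := Nat.exists_eq_succ_of_ne_zero ha
      have hApos : (0:ℝ) < (c:ℝ) + 1 := by positivity
      have hr0 : (0:ℝ) < x ^ (c + 1) := pow_pos hx0 _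
      have hr1 : x ^ (c + 1) < 1 := pow_lt_one₀ hx0' hx1 c.succ_ne_zero
      have hbern := one_add_mul_le_pow (show (-2:ℝ) ≤ (1 - x) / x by
        have : (0:ℝ) ≤ (1 - x) / x := by positivity
        linarith) (c + 1)
      have hx1x : (1:ℝ) + (1 - x) / x = x⁻¹ := by field_simp; ring
      rw [hx1x] at hbern
      have hrinv : x ^ (c + 1) * (x⁻¹) ^ (c + 1) = 1 := by
        rw [← mul_pow, mul_inv_cancel₀ hx0.ne', one_pow]
      have hkey : ((c:ℝ) + 1) * (1 - x) * x ^ c ≤ 1 - x ^ (c + 1) := by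
        have h5 : x ^ (c + 1) * (1 + ((c:ℝ) + 1) * ((1 - x) / x))
            ≤ x ^ (c + 1) * (x⁻¹) ^ (c + 1) := by
          apply mul_le_mul_of_nonneg_left _ hr0.le
          exact_mod_cast hbern
        rw [hrinv] at h5
        have hxx : x ^ (c + 1) * (((c:ℝ) + 1) * ((1 - x) / x)) = ((c:ℝ) + 1) * (1 - x) * x ^ c := by
          rw [pow_succ]
          field_simp
        nlinarith [h5, hxx]
      have hsum_b : Summable (fun b => F (c + 1, b)) := hFsum.prod_factor _
      have hval : ∑' b : ℕ, F (c + 1, b)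
          = 1 / ((c:ℝ) + 1) * (x ^ (c + 1) * (1 - x ^ (c + 1))⁻¹) := by
        rw [Summable.tsum_eq_zero_add hsum_b]
        have hF0 : F (c + 1, 0) = 0 := by simp [hFdef]
        rw [hF0, zero_add]
        have hre : (fun b : ℕ => F (c + 1, b + 1))
            = fun b => 1 / ((c:ℝ) + 1) * (x ^ (c + 1) * (x ^ (c + 1)) ^ b) := by
          funext b
          simp only [hFdef, Nat.succ_ne_zero, if_false]
          push_cast
          ring
        rw [hre, tsum_mul_left, tsum_mul_left, tsum_geometric_of_lt_one hr0.le hr1]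
      rw [hval]
      have h6 : x ^ (c + 1) * (1 - x ^ (c + 1))⁻¹ ≤ x / (((c:ℝ) + 1) * (1 - x)) := by
        rw [← div_eq_mul_inv, div_le_div_iff₀ (by linarith) (by positivity)]
        have h7 : x * (((c:ℝ) + 1) * (1 - x) * x ^ c) = x ^ (c + 1) * (((c:ℝ) + 1) * (1 - x)) := by
          rw [pow_succ]; ring
        nlinarith [mul_le_mul_of_nonneg_left hkey hx0.le]
      calc 1 / ((c:ℝ) + 1) * (x ^ (c + 1) * (1 - x ^ (c + 1))⁻¹)
          ≤ 1 / ((c:ℝ) + 1) * (x / (((c:ℝ) + 1) * (1 - x))) :=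
            mul_le_mul_of_nonneg_left h6 (by positivity)
        _ = x / (1 - x) * (1 / ((c + 1 : ℕ):ℝ) ^ 2) := by
            push_cast
            field_simp
            all_goals first | ring1 | (left; ring1) | (right; ring1) | tauto
  have hzeta := hasSum_zeta_two.mul_left (x / (1 - x))
  have hup : ∑' p, F p ≤ x / (1 - x) * (Real.pi ^ 2 / 6) := by
    rw [← hprodHS.tsum_eq, ← hzeta.tsum_eq]
    exact Summable.tsum_le_tsum hinner hprodHS.summable hzeta.summable
  have hπ : (0:ℝ) < Real.pi ^ 2 / 6 := by positivity
  have hL : 0 < -Real.log x := by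
    have := Real.log_neg hx0 hx1
    linarith
  have hlog2 : -Real.log x < (1 - x) / x := by
    have h := Real.log_lt_sub_one_of_pos (inv_pos.2 hx0) (by
      intro h
      rw [inv_eq_one_div, div_eq_one_iff_eq hx0.ne'] at h
      exact absurd h.symm hx1.ne)
    rw [Real.log_inv] at h
    have h8 : x⁻¹ - 1 = (1 - x) / x := by field_simp
    linarith [h8 ▸ h]
  have h7 : x / (1 - x) < 1 / (-Real.log x) := by
    rw [div_lt_div_iff₀ h1x hL]
    have h8 : x * ((1 - x) / x) = 1 - x := by field_simp
    nlinarith [mul_lt_mul_of_pos_left hlog2 hx0]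
  have h9 : x / (1 - x) * (Real.pi ^ 2 / 6) < Real.pi ^ 2 / 6 / (-Real.log x) := by
    calc x / (1 - x) * (Real.pi ^ 2 / 6) < 1 / (-Real.log x) * (Real.pi ^ 2 / 6) :=
          mul_lt_mul_of_pos_right h7 hπ
      _ = Real.pi ^ 2 / 6 / (-Real.log x) := by ring
  have hS_lt : ∑' n : ℕ, (sigma1 (n + 1) : ℝ) / (n + 1) * x ^ (n + 1)
      < Real.pi ^ 2 / 6 / (-Real.log x) := by
    rw [hSval]
    exact lt_of_le_of_lt hup h9
  refine ⟨?_, hgoal2⟩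
  have h10 : Real.pi ^ 2 / 6 / Real.log x = -(Real.pi ^ 2 / 6 / (-Real.log x)) := by
    rw [div_neg, neg_neg]
  rw [h10]
  exact neg_lt_neg hS_lt
end

section
/- The improper integral ∫_{-∞}^{0} ln(1 - e^y) dy converges and equals -π²/6 (that is, -ζ(2)). -/
/-!
On `y < 0` the logarithm expands as `-log (1 - e^y) = ∑ e^{(n+1)y} / (n+1)`, a series of nonnegative
integrable functions. Monotone convergence lets us integrate termwise; the `n`-th term integrates to
`1 / (n+1)²`, and these sum to `ζ(2) = π²/6`.
-/

open MeasureTheory Real Set Filter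

section NonnegSeries

variable {α : Type*} [MeasurableSpace α] {μ : Measure α} {F : ℕ → α → ℝ} {f : α → ℝ}

theorem integrable_of_hasSum_of_nonneg (hF_nonneg : ∀ n, 0 ≤ᵐ[μ] F n)
    (hF_int : ∀ n, Integrable (F n) μ) (hF_sum : Summable fun n ↦ ∫ a, F n a ∂μ)
    (hf : ∀ᵐ a ∂μ, HasSum (F · a) (f a)) : Integrable f μ := by
  have hF_nonneg' : ∀ᵐ a ∂μ, ∀ n, 0 ≤ F n a := ae_all_iff.2 hF_nonneg
  have hf_meas : AEStronglyMeasurable f μ :=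
    aestronglyMeasurable_of_tendsto_ae atTop
      (fun n ↦ Finset.aestronglyMeasurable_sum _ fun i _ ↦ (hF_int i).1)
      (hf.mono fun a ha ↦ by simpa only [Finset.sum_apply] using ha.tendsto_sum_nat)
  have hf_nonneg : 0 ≤ᵐ[μ] f := by
    filter_upwards [hf, hF_nonneg'] with a ha h0 using ha.nonneg h0
  refine ⟨hf_meas, (hasFiniteIntegral_iff_ofReal hf_nonneg).2 ?_⟩
  calc ∫⁻ a, ENNReal.ofReal (f a) ∂μ
      = ∫⁻ a, ∑' n, ENNReal.ofReal (F n a) ∂μ := by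
        refine lintegral_congr_ae ?_
        filter_upwards [hf, hF_nonneg'] with a ha h0
        rw [← ha.tsum_eq, ENNReal.ofReal_tsum_of_nonneg h0 ha.summable]
    _ = ∑' n, ENNReal.ofReal (∫ a, F n a ∂μ) := by
        rw [lintegral_tsum fun n ↦ (hF_int n).aemeasurable.ennreal_ofReal]
        exact tsum_congr fun n ↦ (ofReal_integral_eq_lintegral_ofReal (hF_int n) (hF_nonneg n)).symm
    _ = ENNReal.ofReal (∑' n, ∫ a, F n a ∂μ) :=
        (ENNReal.ofReal_tsum_of_nonneg (fun n ↦ integral_nonneg_of_ae (hF_nonneg n)) hF_sum).symm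
    _ < ⊤ := ENNReal.ofReal_lt_top

theorem hasSum_integral_of_hasSum_of_nonneg (hF_nonneg : ∀ n, 0 ≤ᵐ[μ] F n)
    (hF_int : ∀ n, Integrable (F n) μ) (hF_sum : Summable fun n ↦ ∫ a, F n a ∂μ)
    (hf : ∀ᵐ a ∂μ, HasSum (F · a) (f a)) : HasSum (fun n ↦ ∫ a, F n a ∂μ) (∫ a, f a ∂μ) :=
  hasSum_integral_of_dominated_convergence F (fun n ↦ (hF_int n).1)
    (fun n ↦ (hF_nonneg n).mono fun _ h ↦ (Real.norm_of_nonneg h).le)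
    (hf.mono fun _ h ↦ h.summable)
    ((integrable_of_hasSum_of_nonneg hF_nonneg hF_int hF_sum hf).congr
      (hf.mono fun _ h ↦ h.tsum_eq.symm))
    hf

end NonnegSeries

theorem hasSum_exp_mul_div_neg_log_one_sub_exp {y : ℝ} (hy : y < 0) :
    HasSum (fun n : ℕ ↦ exp ((n + 1) * y) / (n + 1)) (-log (1 - exp y)) := by
  have h := hasSum_pow_div_log_of_abs_lt_one (x := exp y)
    (by rw [abs_of_pos (exp_pos y)]; exact exp_lt_one_iff.2 hy)
  simpa only [← exp_nat_mul, Nat.cast_add, Nat.cast_one] using h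

theorem integral_exp_mul_Iio_zero {a : ℝ} (ha : 0 < a) :
    ∫ y in Iio (0 : ℝ), exp (a * y) = 1 / a := by
  rw [setIntegral_congr_set Iio_ae_eq_Iic, integral_exp_mul_Iic ha, mul_zero, exp_zero]

theorem hasSum_one_div_nat_add_one_sq : HasSum (fun n : ℕ ↦ 1 / ((n : ℝ) + 1) ^ 2) (π ^ 2 / 6) := by
  simpa using (hasSum_nat_add_iff' 1).2 hasSum_zeta_two

/-- The improper integral `∫_{-∞}^0 ln(1 - e^y) dy` converges and equals `-π²/6`. -/
theorem integral_log_one_sub_exp :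
    MeasureTheory.IntegrableOn (fun y : ℝ => Real.log (1 - Real.exp y)) (Set.Iio 0) ∧
      ∫ y in Set.Iio (0 : ℝ), Real.log (1 - Real.exp y) = -(Real.pi ^ 2 / 6) := by
  set F : ℕ → ℝ → ℝ := fun n y ↦ exp ((n + 1) * y) / (n + 1)
  have hF_nonneg n : 0 ≤ᵐ[volume.restrict (Iio 0)] F n := ae_of_all _ fun y ↦ by positivity
  have hF_int n : IntegrableOn (F n) (Iio 0) :=
    ((integrableOn_exp_mul_Iic (by positivity) 0).mono_set Iio_subset_Iic_self).div_const _
  have hF_integral n : ∫ y in Iio 0, F n y = 1 / ((n : ℝ) + 1) ^ 2 := by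
    rw [integral_div, integral_exp_mul_Iio_zero (by positivity), div_div, sq]
  have hF_hasSum : ∀ᵐ y ∂volume.restrict (Iio 0), HasSum (F · y) (-log (1 - exp y)) :=
    ae_restrict_of_forall_mem measurableSet_Iio fun y hy ↦ hasSum_exp_mul_div_neg_log_one_sub_exp hy
  have hbasel := hasSum_one_div_nat_add_one_sq
  simp_rw [← hF_integral] at hbasel
  have hint := (integrable_of_hasSum_of_nonneg hF_nonneg hF_int hbasel.summable hF_hasSum).fun_neg
  simp only [neg_neg] at hint
  refine ⟨hint, ?_⟩
  rw [← neg_neg (∫ y in Iio 0, _), ← integral_neg,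
    (hasSum_integral_of_hasSum_of_nonneg hF_nonneg hF_int hbasel.summable hF_hasSum).unique hbasel]
end
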